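/- arXiv:1805.05097 — 6 statements merged into one kernel-verified Lean document; each statement's English description precedes it below -/
import Mathlib

section
/- Let σ be a partition of the set of all primes, G a finite group, A a σ-subnormal subgroup of G, and K any subgroup of G. Then A ∩ K is σ-subnormal in K. -/
open Subgroup Pointwise

/-- `σ` is a partition of the set of all primes: every member of every block is prime,
and every prime lies in exactly one block. -/
def IsPrimePartition {ι : Type*} (σ : ι → Set ℕ) : Prop :=
  (∀ i, ∀ p ∈ σ i, Nat.Prime p) ∧ ∀ p : ℕ, Nat.Prime p → ∃! i, p ∈ σ i

/-- `σ(m)`: the set of indices `i` such that `σ i` contains a prime divisor of `m`. -/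
def sigmaClasses {ι : Type*} (σ : ι → Set ℕ) (m : ℕ) : Set ι :=
  {i | ∃ p ∈ σ i, Nat.Prime p ∧ p ∣ m}

/-- A group of order `m` is `σ`-primary iff `m = 1` or `|σ(m)| = 1`. -/
def IsSigmaPrimary {ι : Type*} (σ : ι → Set ℕ) (m : ℕ) : Prop :=
  m = 1 ∨ (sigmaClasses σ m).ncard = 1

/-- `m` is a `Π`-number: every prime divisor of `m` lies in some block belonging to `Π`. -/
def IsPiNumber {ι : Type*} (σ : ι → Set ℕ) (Pi : Set ι) (m : ℕ) : Prop :=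
  ∀ p : ℕ, Nat.Prime p → p ∣ m → ∃ i ∈ Pi, p ∈ σ i

/-- `H` is a Hall `Π`-subgroup of `G`: `|H|` is a `Π`-number and `|G : H|` is a `Π'`-number. -/
def IsHallPiSubgroup {ι : Type*} (σ : ι → Set ℕ) (Pi : Set ι) {G : Type*} [Group G]
    (H : Subgroup G) : Prop :=
  IsPiNumber σ Pi (Nat.card H) ∧ IsPiNumber σ Piᶜ H.index

/-- `A` is `σ`-subnormal in `G`. -/
def IsSigmaSubnormal {ι : Type*} (σ : ι → Set ℕ) {G : Type*} [Group G] (A : Subgroup G) : Prop :=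
  ∃ (t : ℕ) (c : Fin (t + 1) → Subgroup G), Monotone c ∧ c 0 = A ∧ c (Fin.last t) = ⊤ ∧
    ∀ i : Fin t, ((c i.castSucc).subgroupOf (c i.succ)).Normal ∨
      IsSigmaPrimary σ
        (Nat.card (↥(c i.succ) ⧸ ((c i.castSucc).subgroupOf (c i.succ)).normalCore))

/-- `M/N` is a chief factor of `G`. -/
def IsChiefFactor {G : Type*} [Group G] (N M : Subgroup G) : Prop :=
  N.Normal ∧ M.Normal ∧ N < M ∧
    ∀ K : Subgroup G, K.Normal → N ≤ K → K ≤ M → K = N ∨ K = M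

/-- `G` is `σ`-soluble: every chief factor of `G` is `σ`-primary. -/
def IsSigmaSoluble {ι : Type*} (σ : ι → Set ℕ) (G : Type*) [Group G] : Prop :=
  ∀ N M : Subgroup G, IsChiefFactor N M →
    IsSigmaPrimary σ (Nat.card (↥M ⧸ N.subgroupOf M))

/-- `A` is an `n`-maximal subgroup of `G`. -/
def IsNMaximal {G : Type*} [Group G] (n : ℕ) (A : Subgroup G) : Prop :=
  ∃ c : Fin (n + 1) → Subgroup G, Monotone c ∧ c 0 = A ∧ c (Fin.last n) = ⊤ ∧
    ∀ i : Fin n, IsCoatom ((c i.castSucc).subgroupOf (c i.succ))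

/-- `A` is subnormal in `G`. -/
def IsSubnormalSubgroup {G : Type*} [Group G] (A : Subgroup G) : Prop :=
  ∃ (t : ℕ) (c : Fin (t + 1) → Subgroup G), Monotone c ∧ c 0 = A ∧ c (Fin.last t) = ⊤ ∧
    ∀ i : Fin t, ((c i.castSucc).subgroupOf (c i.succ)).Normal

/-- `S` is a complete Hall `σ`-set of `G`. -/
def IsCompleteHallSigmaSet {ι : Type*} (σ : ι → Set ℕ) {G : Type*} [Group G]
    (S : Set (Subgroup G)) : Prop :=
  (∀ H ∈ S, H ≠ ⊥ → ∃ i ∈ sigmaClasses σ (Nat.card G), IsHallPiSubgroup σ {i} H) ∧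
  ∀ i ∈ sigmaClasses σ (Nat.card G), ∃! H, H ∈ S ∧ IsHallPiSubgroup σ {i} H

/-- `G` is `σ`-dispersive. -/
def IsSigmaDispersive {ι : Type*} (σ : ι → Set ℕ) (G : Type*) [Group G] : Prop :=
  ∃ (t : ℕ) (c : Fin (t + 1) → Subgroup G) (H : Fin t → Subgroup G),
    StrictMono c ∧ c 0 = ⊥ ∧ c (Fin.last t) = ⊤ ∧ (∀ i, (c i).Normal) ∧
    IsCompleteHallSigmaSet σ (Set.range H) ∧
    ∀ i : Fin t, (c i.castSucc : Set G) * (H i : Set G) = (c i.succ : Set G)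


lemma primary_of_dvd {ι : Type*} {σ : ι → Set ℕ} (hσ : IsPrimePartition σ)
    {m n : ℕ} (hm : IsSigmaPrimary σ m) (hd : n ∣ m) : IsSigmaPrimary σ n := by
  rcases eq_or_ne n 1 with rfl | hn1
  · exact Or.inl rfl
  rcases hm with rfl | hm
  · exact Or.inl (Nat.eq_one_of_dvd_one hd)
  · right
    obtain ⟨a, ha⟩ := Set.ncard_eq_one.mp hm
    have hsub : sigmaClasses σ n ⊆ sigmaClasses σ m := by
      rintro i ⟨p, hpσ, hp, hpn⟩
      exact ⟨p, hpσ, hp, hpn.trans hd⟩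
    obtain ⟨p, hp, hpn⟩ := Nat.exists_prime_and_dvd hn1
    obtain ⟨i, hi, _⟩ := hσ.2 p hp
    have hne : (sigmaClasses σ n).Nonempty := ⟨i, p, hi, hp, hpn⟩
    rw [ha] at hsub
    have : sigmaClasses σ n = {a} := (Set.Nonempty.subset_singleton_iff hne).mp hsub
    rw [this]; simp


-- key card divisibility lemma
lemma card_quot_dvd {G : Type*} [Group G] [Finite G] {P Q : Subgroup G} (hPQ : P ≤ Q)
    (K : Subgroup G) :
    Nat.card ((((Q ⊓ K).subgroupOf K)) ⧸
      ((((P ⊓ K).subgroupOf K)).subgroupOf ((Q ⊓ K).subgroupOf K)).normalCore) ∣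
    Nat.card (Q ⧸ (P.subgroupOf Q).normalCore) := by
  set N := (P.subgroupOf Q).normalCore
  set X := (Q ⊓ K).subgroupOf K
  set M' := (((P ⊓ K).subgroupOf K)).subgroupOf X
  set e : X ≃* (Q ⊓ K : Subgroup G) := subgroupOfEquivOfLe inf_le_right
  set φ : X →* Q ⧸ N :=
    (QuotientGroup.mk' N).comp ((Subgroup.inclusion inf_le_left).comp e.toMonoidHom)
  have hker : φ.ker ≤ M'.normalCore := by
    apply Subgroup.normal_le_normalCore.mpr
    intro x hx
    have hx' : (QuotientGroup.mk' N) ((Subgroup.inclusion (inf_le_left : Q ⊓ K ≤ Q)) (e x)) = 1 :=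
      hx
    rw [QuotientGroup.mk'_apply, QuotientGroup.eq_one_iff] at hx'
    have hP' : (Subgroup.inclusion (inf_le_left : Q ⊓ K ≤ Q) (e x)) ∈ P.subgroupOf Q :=
      Subgroup.normalCore_le _ hx'
    have hP : ((x : K) : G) ∈ P := Subgroup.mem_subgroupOf.mp hP'
    have hK : ((x : K) : G) ∈ K := (x : K).2
    exact Subgroup.mem_subgroupOf.mpr (Subgroup.mem_subgroupOf.mpr ⟨hP, hK⟩)
  have h1 : Nat.card (X ⧸ M'.normalCore) ∣ Nat.card (X ⧸ φ.ker) := by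
    apply Subgroup.card_dvd_of_surjective (QuotientGroup.map φ.ker M'.normalCore (MonoidHom.id X)
      (by simpa using hker))
    intro y
    obtain ⟨x, rfl⟩ := QuotientGroup.mk_surjective y
    exact ⟨QuotientGroup.mk x, rfl⟩
  have h2 : Nat.card (X ⧸ φ.ker) ∣ Nat.card (Q ⧸ N) := by
    have := Nat.card_congr (QuotientGroup.quotientKerEquivRange φ).toEquiv
    rw [this]
    exact Subgroup.card_subgroup_dvd_card φ.range
  exact h1.trans h2

lemma normal_transfer {G : Type*} [Group G] {P Q : Subgroup G} (hPQ : P ≤ Q)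
    (K : Subgroup G) (hN : (P.subgroupOf Q).Normal) :
    ((((P ⊓ K).subgroupOf K)).subgroupOf ((Q ⊓ K).subgroupOf K)).Normal := by
  constructor
  intro n hn g
  have hnP : ((n : K) : G) ∈ P := (Subgroup.mem_subgroupOf.mp (Subgroup.mem_subgroupOf.mp hn)).1
  have hgQ : ((g : K) : G) ∈ Q := (Subgroup.mem_subgroupOf.mp g.2).1
  have hnQ : ((n : K) : G) ∈ Q := hPQ hnP
  have := hN.conj_mem ⟨((n : K) : G), hnQ⟩ (Subgroup.mem_subgroupOf.mpr hnP) ⟨((g : K) : G), hgQ⟩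
  rw [Subgroup.mem_subgroupOf] at this
  apply Subgroup.mem_subgroupOf.mpr
  apply Subgroup.mem_subgroupOf.mpr
  refine ⟨?_, ?_⟩
  · simpa using this
  · simp only [Subgroup.coe_mul, Subgroup.coe_inv]
    exact K.mul_mem (K.mul_mem (g : K).2 (n : K).2) (K.inv_mem (g : K).2)

/-- If `A` is `σ`-subnormal in `G` and `K` is any subgroup of `G`, then `A ∩ K` is
`σ`-subnormal in `K`. -/
theorem sigmaSubnormal_inf_subgroupOf
    {ι : Type*} (σ : ι → Set ℕ) (hσ : IsPrimePartition σ)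
    (G : Type*) [Group G] [Finite G] (A K : Subgroup G)
    (hA : IsSigmaSubnormal σ A) :
    IsSigmaSubnormal σ ((A ⊓ K).subgroupOf K) := by
  obtain ⟨t, c, hmono, hc0, hclast, hstep⟩ := hA
  refine ⟨t, fun i => (c i ⊓ K).subgroupOf K, ?_, ?_, ?_, ?_⟩
  · intro i j hij
    exact Subgroup.comap_mono (inf_le_inf_right K (hmono hij))
  · simp only []; rw [hc0]
  · simp only []; rw [hclast, top_inf_eq, Subgroup.subgroupOf_self]
  · intro i
    have hPQ : c i.castSucc ≤ c i.succ := hmono (Fin.castSucc_le_succ i)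
    rcases hstep i with h | h
    · exact Or.inl (normal_transfer hPQ K h)
    · exact Or.inr (primary_of_dvd hσ h (card_quot_dvd hPQ K))
end

section
/- Let σ be a partition of the set of all primes, Π a non-empty subset of σ, G a finite group, and A a σ-subnormal subgroup of G. If H ≠ 1 is a Hall Π-subgroup of G and |A| is not a Π'-number (where Π' = σ∖Π), then A ∩ H ≠ 1 and A ∩ H is a Hall Π-subgroup of A. -/
open Subgroup Pointwise

/-!
Walk down a `σ`-subnormal chain `A = A₀ ≤ A₁ ≤ ⋯ ≤ Aₜ = G`, showing that every index
`|Aₖ : Aₖ ∩ H|` is a `Π'`-number. At a normal step `A ⊴ B` it is `|AH : H|`, a divisor of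
`|B : B ∩ H|`. At a `σ`-primary step with core `N = A_B`, either `|B : N|` is a `Π`-number, so
`B = (B ∩ H)N` and `|A : A ∩ H| = |B : B ∩ H|`; or it is a `Π'`-number, so `|(B ∩ H)N : N|` is
both a `Π`- and a `Π'`-number and `B ∩ H ≤ N ≤ A`. Finally `|A|` is not a `Π'`-number while
`|A : A ∩ H|` is, so `A ∩ H ≠ 1`.
-/

section

variable {ι : Type*} {σ : ι → Set ℕ} {Pi : Set ι}

theorem IsPiNumber.of_dvd {m n : ℕ} (h : IsPiNumber σ Pi n) (hmn : m ∣ n) : IsPiNumber σ Pi m :=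
  fun p hp hpm => h p hp (hpm.trans hmn)

theorem IsPiNumber.eq_one_of_compl (hσ : IsPrimePartition σ) {m : ℕ} (h : IsPiNumber σ Pi m)
    (h' : IsPiNumber σ Piᶜ m) : m = 1 := by
  by_contra hm
  obtain ⟨p, hp, hpm⟩ := Nat.exists_prime_and_dvd hm
  obtain ⟨i, hi, hpi⟩ := h p hp hpm
  obtain ⟨i', hi', hpi'⟩ := h' p hp hpm
  obtain ⟨j, -, hj⟩ := hσ.2 p hp
  exact hi' ((hj i' hpi').trans (hj i hpi).symm ▸ hi)

theorem IsSigmaPrimary.isPiNumber_or_compl (hσ : IsPrimePartition σ) {m : ℕ}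
    (h : IsSigmaPrimary σ m) (Pi : Set ι) : IsPiNumber σ Pi m ∨ IsPiNumber σ Piᶜ m := by
  rcases h with rfl | h
  · exact Or.inl fun p hp hp1 => absurd (Nat.le_of_dvd one_pos hp1) hp.one_lt.not_ge
  obtain ⟨j, hj⟩ := Set.ncard_eq_one.mp h
  have hblock : ∀ p, Nat.Prime p → p ∣ m → p ∈ σ j := by
    intro p hp hpm
    obtain ⟨i, hpi, -⟩ := hσ.2 p hp
    have hi : i ∈ sigmaClasses σ m := ⟨p, hpi, hp, hpm⟩
    rw [hj, Set.mem_singleton_iff] at hi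
    exact hi ▸ hpi
  by_cases hjPi : j ∈ Pi
  · exact Or.inl fun p hp hpm => ⟨j, hjPi, hblock p hp hpm⟩
  · exact Or.inr fun p hp hpm => ⟨j, hjPi, hblock p hp hpm⟩

variable {G : Type*} [Group G]

theorem Subgroup.relIndex_sup_normal [Finite G] (H N : Subgroup G) [N.Normal] :
    H.relIndex (H ⊔ N) = H.relIndex N := by
  have hcount := (relIndex_mul_relIndex (H ⊓ N) H (H ⊔ N) inf_le_left le_sup_left).trans
    (relIndex_mul_relIndex (H ⊓ N) N (H ⊔ N) inf_le_right le_sup_right).symm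
  rw [relIndex_sup_right, inf_relIndex_left, inf_relIndex_right, ← inf_relIndex_left, inf_comm,
    mul_comm (relIndex _ N)] at hcount
  exact Nat.eq_of_mul_eq_mul_left (Nat.pos_of_ne_zero index_ne_zero_of_finite) hcount

theorem IsHallPiSubgroup.subgroupOf {H : Subgroup G} (hH : IsHallPiSubgroup σ Pi H)
    {B : Subgroup G} (hB : IsPiNumber σ Piᶜ (H.relIndex B)) :
    IsHallPiSubgroup σ Pi (H.subgroupOf B) :=
  ⟨hH.1.of_dvd (card_comap_dvd_of_injective H B.subtype B.subtype_injective), hB⟩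

theorem IsHallPiSubgroup.ne_bot {K : Subgroup G} (hK : IsHallPiSubgroup σ Pi K)
    (hG : ¬ IsPiNumber σ Piᶜ (Nat.card G)) : K ≠ ⊥ := by
  rintro rfl
  exact hG (index_bot (G := G) ▸ hK.2)

theorem IsHallPiSubgroup.relIndex_dvd_index [Finite G] (hσ : IsPrimePartition σ)
    {H : Subgroup G} (hH : IsHallPiSubgroup σ Pi H) {A : Subgroup G}
    (hA : A.Normal ∨ IsSigmaPrimary σ (Nat.card (G ⧸ A.normalCore))) :
    H.relIndex A ∣ H.index := by
  rcases hA with hA | hA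
  · exact relIndex_sup_normal H A ▸ relIndex_dvd_index_of_le le_sup_left
  set N := A.normalCore
  have hNA : N ≤ A := normalCore_le A
  rcases hA.isPiNumber_or_compl hσ Pi with hN | hN
  · have hHN : H ⊔ N = ⊤ := index_eq_one.mp <| IsPiNumber.eq_one_of_compl hσ
      (hN.of_dvd (index_dvd_of_le le_sup_right)) (hH.2.of_dvd (index_dvd_of_le le_sup_left))
    have hle : H.index ≤ H.relIndex A := by
      calc H.index = H.relIndex N := by rw [← relIndex_sup_normal, hHN, relIndex_top_right]
        _ ≤ H.relIndex A := relIndex_le_of_le_right hNA index_ne_zero_of_finite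
    have hge : H.relIndex A ≤ H.index :=
      relIndex_top_right H ▸ relIndex_le_of_le_right le_top index_ne_zero_of_finite
    exact (le_antisymm hge hle).dvd
  · have hHN : H ≤ N := relIndex_eq_one.mp <| IsPiNumber.eq_one_of_compl hσ
      (hH.1.of_dvd (relIndex_dvd_card N H)) (hN.of_dvd (relIndex_dvd_index_of_normal N H))
    exact relIndex_dvd_index_of_le (hHN.trans hNA)

theorem IsHallPiSubgroup.isPiNumber_relIndex [Finite G] (hσ : IsPrimePartition σ)
    {H : Subgroup G} (hH : IsHallPiSubgroup σ Pi H) {A : Subgroup G}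
    (hA : IsSigmaSubnormal σ A) : IsPiNumber σ Piᶜ (H.relIndex A) := by
  obtain ⟨t, c, hmono, rfl, hlast, hstep⟩ := hA
  suffices ∀ i, IsPiNumber σ Piᶜ (H.relIndex (c i)) from this 0
  intro i
  induction i using Fin.reverseInduction with
  | last => rw [hlast, relIndex_top_right]; exact hH.2
  | cast i ih =>
    have hle : c i.castSucc ≤ c i.succ := hmono (Fin.castSucc_le_succ i)
    have hdvd := (hH.subgroupOf ih).relIndex_dvd_index hσ (hstep i)
    rw [relIndex_subgroupOf hle] at hdvd
    exact ih.of_dvd hdvd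

end

theorem sigmaSubnormal_inf_hall_general
    {ι : Type*} (σ : ι → Set ℕ) (hσ : IsPrimePartition σ) (Pi : Set ι)
    (G : Type*) [Group G] [Finite G] (A H : Subgroup G)
    (hA : IsSigmaSubnormal σ A)
    (hH : IsHallPiSubgroup σ Pi H)
    (hAnot : ¬ IsPiNumber σ Piᶜ (Nat.card A)) :
    A ⊓ H ≠ ⊥ ∧ IsHallPiSubgroup σ Pi ((A ⊓ H).subgroupOf A) := by
  have hall : IsHallPiSubgroup σ Pi ((A ⊓ H).subgroupOf A) := by
    rw [inf_subgroupOf_left]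
    exact hH.subgroupOf (hH.isPiNumber_relIndex hσ hA)
  refine ⟨fun hbot => hall.ne_bot hAnot ?_, hall⟩
  rw [hbot, bot_subgroupOf]

/-- Let `A` be `σ`-subnormal in `G`. If `H ≠ 1` is a Hall `Π`-subgroup of `G` and `|A|` is not
a `Π'`-number, then `A ∩ H ≠ 1` is a Hall `Π`-subgroup of `A`. -/
theorem sigmaSubnormal_inf_hall
    {ι : Type*} (σ : ι → Set ℕ) (hσ : IsPrimePartition σ) (Pi : Set ι) (hPi : Pi.Nonempty)
    (G : Type*) [Group G] [Finite G] (A H : Subgroup G)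
    (hA : IsSigmaSubnormal σ A)
    (hH : IsHallPiSubgroup σ Pi H) (hHne : H ≠ ⊥)
    (hAnot : ¬ IsPiNumber σ Piᶜ (Nat.card A)) :
    A ⊓ H ≠ ⊥ ∧ IsHallPiSubgroup σ Pi ((A ⊓ H).subgroupOf A) :=
  sigmaSubnormal_inf_hall_general σ hσ Pi G A H hA hH hAnot
end

section
/- Let σ be a partition of the set of all primes and G a finite group. If A is a σ-subnormal subgroup of G and A is a Hall Π-subgroup of G for some non-empty subset Π of σ, then A is normal in G. -/
open Subgroup Pointwise

/-
Every member `c i` of a σ-subnormal chain from `A` to `G` normalizes `A`. Since `|A|` is coprime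
to `|G : A|`, a conjugate of `A` lying in `N_G(A)` is `A` itself; so when `c i` is normal in
`c (i+1)`, every `c (i+1)`-conjugate of `A` lies in `c i ≤ N_G(A)`. When instead
`c (i+1) / core(c i)` is σ-primary, its order is a Π-number, and then `c (i+1) = core · A ≤ c i`,
or a Π'-number, and then `A` lies in the core, which is normal in `c (i+1)`.
-/

section Arithmetic

variable {ι : Type*} {σ : ι → Set ℕ}

theorem IsPiNumber.coprime (hσ : IsPrimePartition σ) {Pi : Set ι} {m n : ℕ}
    (hm : IsPiNumber σ Pi m) (hn : IsPiNumber σ Piᶜ n) : m.Coprime n := by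
  refine Nat.coprime_of_dvd fun p hp hpm hpn => ?_
  obtain ⟨i, hi, hpi⟩ := hm p hp hpm
  obtain ⟨j, hj, hpj⟩ := hn p hp hpn
  obtain ⟨k, -, hk⟩ := hσ.2 p hp
  exact hj ((hk j hpj).trans (hk i hpi).symm ▸ hi)

theorem IsSigmaPrimary.isPiNumber_or_isPiNumber_compl (hσ : IsPrimePartition σ) {n : ℕ}
    (hn : IsSigmaPrimary σ n) (Pi : Set ι) : IsPiNumber σ Pi n ∨ IsPiNumber σ Piᶜ n := by
  rcases hn with rfl | hn
  · exact Or.inl fun p hp hp1 => absurd (Nat.dvd_one.mp hp1) hp.ne_one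
  obtain ⟨j, hj⟩ := Set.ncard_eq_one.mp hn
  have mem_j : ∀ p, p.Prime → p ∣ n → p ∈ σ j := fun p hp hpn => by
    obtain ⟨k, hk, -⟩ := hσ.2 p hp
    have hkj : k ∈ sigmaClasses σ n := ⟨p, hk, hp, hpn⟩
    rw [hj, Set.mem_singleton_iff] at hkj
    exact hkj ▸ hk
  by_cases hjPi : j ∈ Pi
  · exact Or.inl fun p hp hpn => ⟨j, hjPi, mem_j p hp hpn⟩
  · exact Or.inr fun p hp hpn => ⟨j, hjPi, mem_j p hp hpn⟩

end Arithmetic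

namespace Subgroup

variable {G : Type*} [Group G] {A H K L D : Subgroup G}

theorem le_of_coprime_card_relIndex (hHL : H ≤ L) (hKL : K ≤ L) (hL : L ≤ normalizer H)
    (hcop : (Nat.card K).Coprime (H.relIndex L)) : K ≤ H := by
  have : (H.subgroupOf L).Normal := (normal_subgroupOf_iff_le_normalizer hHL).mpr hL
  have hdvd : H.relIndex K ∣ H.relIndex L := by
    rw [← relIndex_subgroupOf hKL]
    exact relIndex_dvd_index_of_normal (H.subgroupOf L) (K.subgroupOf L)
  exact relIndex_eq_one.mp (Nat.eq_one_of_dvd_coprimes hcop (relIndex_dvd_card H K) hdvd)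

theorem le_sup_of_coprime_relIndex_index (hAD : A ≤ D) (hcop : (H.relIndex D).Coprime A.index) :
    D ≤ H ⊔ A :=
  relIndex_eq_one.mp <| Nat.eq_one_of_dvd_coprimes hcop (relIndex_dvd_of_le_left D le_sup_left)
    ((relIndex_dvd_of_le_left D le_sup_right).trans (relIndex_dvd_index_of_le hAD))

theorem le_normalizer_of_forall_conj_mem (h : ∀ g ∈ D, ∀ a ∈ A, g * a * g⁻¹ ∈ A) :
    D ≤ normalizer A := fun g hg =>
  mem_normalizer_iff.mpr fun a =>
    ⟨h g hg a, fun ha => by simpa [mul_assoc] using h g⁻¹ (inv_mem hg) _ ha⟩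

theorem le_normalizer_of_le_normalizer_of_coprime (hcop : (Nat.card A).Coprime A.index)
    (hAK : A ≤ K) (hK : K ≤ normalizer A) (hD : D ≤ normalizer K) : D ≤ normalizer A := by
  refine le_normalizer_of_forall_conj_mem fun g hg a ha => ?_
  have hconj : A.map (MulAut.conj g) ≤ A := by
    refine le_of_coprime_card_relIndex le_normalizer ?_ le_rfl ?_
    · exact (map_mono hAK).trans ((mem_normalizer_iff_map_conj_eq.mp (hD hg)).le.trans hK)
    · rw [card_map_of_injective (MulAut.conj g).injective]
      exact hcop.coprime_dvd_right (relIndex_dvd_index_of_le le_normalizer)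
  exact hconj ⟨a, ha, rfl⟩

end Subgroup

section SigmaSubnormal

variable {ι : Type*} {σ : ι → Set ℕ} {Pi : Set ι} {G : Type*} [Group G] {A K D : Subgroup G}

theorem IsHallPiSubgroup.coprime_card_index (hσ : IsPrimePartition σ)
    (hHall : IsHallPiSubgroup σ Pi A) : (Nat.card A).Coprime A.index :=
  hHall.1.coprime hσ hHall.2

theorem le_normalizer_of_relIndex_isPiNumber_or_compl (hσ : IsPrimePartition σ)
    (hHall : IsHallPiSubgroup σ Pi A) (hAK : A ≤ K) (hKD : K ≤ D) (hK : K ≤ normalizer A)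
    {N : Subgroup G} (hNK : N ≤ K) (hND : N ≤ D) (hDN : D ≤ normalizer N)
    (hN : IsPiNumber σ Pi (N.relIndex D) ∨ IsPiNumber σ Piᶜ (N.relIndex D)) :
    D ≤ normalizer A := by
  rcases hN with hN | hN
  · exact (le_sup_of_coprime_relIndex_index (hAK.trans hKD) (hN.coprime hσ hHall.2)).trans
      ((sup_le hNK hAK).trans hK)
  · have hAN : A ≤ N :=
      le_of_coprime_card_relIndex hND (hAK.trans hKD) hDN (hHall.1.coprime hσ hN)
    exact le_normalizer_of_le_normalizer_of_coprime (hHall.coprime_card_index hσ) hAN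
      (hNK.trans hK) hDN

theorem le_normalizer_of_sigmaSubnormal_step (hσ : IsPrimePartition σ)
    (hHall : IsHallPiSubgroup σ Pi A) (hAK : A ≤ K) (hKD : K ≤ D) (hK : K ≤ normalizer A)
    (hstep : (K.subgroupOf D).Normal ∨
      IsSigmaPrimary σ (Nat.card (D ⧸ (K.subgroupOf D).normalCore))) :
    D ≤ normalizer A := by
  rcases hstep with hnormal | hprimary
  · exact le_normalizer_of_le_normalizer_of_coprime (hHall.coprime_card_index hσ) hAK hK
      ((normal_subgroupOf_iff_le_normalizer hKD).mp hnormal)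
  set N := (K.subgroupOf D).normalCore.map D.subtype
  have hN : N.subgroupOf D = (K.subgroupOf D).normalCore :=
    comap_map_eq_self_of_injective D.subtype_injective _
  have hND : N ≤ D := map_subtype_le _
  have hNK : N ≤ K := (map_mono (normalCore_le _)).trans <| by
    rw [subgroupOf_map_subtype]
    exact inf_le_left
  have hDN : D ≤ normalizer N :=
    (normal_subgroupOf_iff_le_normalizer hND).mp (hN ▸ normalCore_normal _)
  have hrel : N.relIndex D = Nat.card (D ⧸ (K.subgroupOf D).normalCore) := by
    rw [relIndex, hN]
    rfl
  exact le_normalizer_of_relIndex_isPiNumber_or_compl hσ hHall hAK hKD hK hNK hND hDN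
    (hrel ▸ hprimary.isPiNumber_or_isPiNumber_compl hσ Pi)

end SigmaSubnormal

theorem sigmaSubnormal_hall_normal_general
    {ι : Type*} (σ : ι → Set ℕ) (hσ : IsPrimePartition σ) (Pi : Set ι)
    (G : Type*) [Group G] (A : Subgroup G)
    (hA : IsSigmaSubnormal σ A) (hHall : IsHallPiSubgroup σ Pi A) :
    A.Normal := by
  obtain ⟨t, c, hmono, hc0, hlast, hstep⟩ := hA
  have hAc : ∀ i, A ≤ c i := fun i => hc0 ▸ hmono (Fin.zero_le i)
  have hc : ∀ i, c i ≤ normalizer A := by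
    intro i
    induction i using Fin.induction with
    | zero => exact hc0 ▸ le_normalizer
    | succ i ih =>
      exact le_normalizer_of_sigmaSubnormal_step hσ hHall (hAc _)
        (hmono (Fin.castSucc_le_succ i)) ih (hstep i)
  exact normalizer_eq_top_iff.mp (top_le_iff.mp (hlast ▸ hc (Fin.last t)))

/-- If `A` is `σ`-subnormal in `G` and `A` is a Hall `Π`-subgroup of `G` for some non-empty
`Π ⊆ σ`, then `A` is normal in `G`. -/
theorem sigmaSubnormal_hall_normal
    {ι : Type*} (σ : ι → Set ℕ) (hσ : IsPrimePartition σ) (Pi : Set ι) (hPi : Pi.Nonempty)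
    (G : Type*) [Group G] [Finite G] (A : Subgroup G)
    (hA : IsSigmaSubnormal σ A) (hHall : IsHallPiSubgroup σ Pi A) :
    A.Normal :=
  sigmaSubnormal_hall_normal_general σ hσ Pi G A hA hHall
end

section
/- Let σ be a partition of the set of all primes and G a finite group with |π(G)| = |σ(G)| (i.e. each member of σ meeting π(G) contains exactly one prime of π(G)). If H is a σ-subnormal subgroup of G, then H is subnormal in G. -/
open Subgroup Pointwise

/-!
If `|π(G)| = |σ(G)|`, each block of `σ` meets `π(G)` in a single prime, so a `σ`-primary
section of `G` is a `p`-group. Hence at each non-normal step `A ≤ B` of a `σ`-subnormal chain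
the quotient `B / A_B` is nilpotent, and in a finite nilpotent group every subgroup is subnormal
(normalizer condition). So `A` is subnormal in `B`, and subnormality composes along the chain.
-/

namespace Subgroup

variable {G : Type*} [Group G]

theorem IsSubnormal.isSubnormalSubgroup {H : Subgroup G} (hH : H.IsSubnormal) :
    IsSubnormalSubgroup H := by
  obtain ⟨n, f, hf, hnormal, hf0, hfn⟩ := hH.exists_chain
  exact ⟨n, fun i => f i, fun i j hij => hf hij, hf0, hfn, fun i => hnormal i⟩

theorem isSubnormal_of_normalizerCondition [WellFoundedGT (Subgroup G)]
    (hG : NormalizerCondition G) (H : Subgroup G) : H.IsSubnormal := by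
  induction H using WellFoundedGT.induction with
  | _ H ih =>
    rcases eq_or_ne H ⊤ with rfl | hH
    · exact .top
    · have hlt := hG H hH.lt_top
      exact .step H _ hlt.le (ih _ hlt) (normal_in_normalizer (H := H))

theorem isSubnormal_of_le_of_isNilpotent_quotient {N H : Subgroup G} [N.Normal]
    [Finite (G ⧸ N)] [Group.IsNilpotent (G ⧸ N)] (hNH : N ≤ H) : H.IsSubnormal := by
  have hbar : (H.map (QuotientGroup.mk' N)).IsSubnormal :=
    isSubnormal_of_normalizerCondition Group.normalizerCondition_of_isNilpotent _
  have hcomap := hbar.comap (QuotientGroup.mk' N)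
  rwa [comap_map_eq, QuotientGroup.ker_mk', sup_eq_left.mpr hNH] at hcomap

theorem isSubnormal_subgroupOf_of_card_quotient_normalCore [Finite G] {A B : Subgroup G}
    {p k : ℕ} (hp : p.Prime)
    (hcard : Nat.card (B ⧸ (A.subgroupOf B).normalCore) = p ^ k) :
    (A.subgroupOf B).IsSubnormal := by
  have : Fact p.Prime := ⟨hp⟩
  have : Group.IsNilpotent (B ⧸ (A.subgroupOf B).normalCore) :=
    (IsPGroup.of_card hcard).isNilpotent
  exact isSubnormal_of_le_of_isNilpotent_quotient (normalCore_le _)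

end Subgroup

namespace IsPrimePartition

variable {ι : Type*} {σ : ι → Set ℕ}

theorem eq_of_mem (hσ : IsPrimePartition σ) {p : ℕ} (hp : p.Prime) {i j : ι}
    (hi : p ∈ σ i) (hj : p ∈ σ j) : i = j :=
  (hσ.2 p hp).unique hi hj

theorem eq_of_mem_of_card_primeFactors_eq (hσ : IsPrimePartition σ) {N : ℕ}
    (hcard : N.primeFactors.card = (sigmaClasses σ N).ncard) {p q : ℕ}
    (hp : p ∈ N.primeFactors) (hq : q ∈ N.primeFactors) {i : ι}
    (hpi : p ∈ σ i) (hqi : q ∈ σ i) : p = q := by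
  have : Nonempty ι := ⟨i⟩
  set block : ℕ → ι := fun r => Classical.epsilon fun j => r ∈ σ j
  have mem_block : ∀ {r j}, r ∈ σ j → r ∈ σ (block r) := fun h =>
    Classical.epsilon_spec (p := fun j => _ ∈ σ j) ⟨_, h⟩
  have block_eq : ∀ {r j}, r ∈ σ j → block r = j := fun h =>
    hσ.eq_of_mem (hσ.1 _ _ h) (mem_block h) h
  have himage : block '' (N.primeFactors : Set ℕ) = sigmaClasses σ N := by
    ext j
    constructor
    · rintro ⟨r, hr, rfl⟩
      obtain ⟨hr, hrN, -⟩ := Nat.mem_primeFactors.mp hr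
      obtain ⟨j, hj, -⟩ := hσ.2 r hr
      exact ⟨r, mem_block hj, hr, hrN⟩
    · rintro ⟨r, hrj, hr, hrN⟩
      exact ⟨r, Nat.mem_primeFactors.mpr ⟨hr, hrN, (Nat.mem_primeFactors.mp hp).2.2⟩,
        block_eq hrj⟩
  have hinj : Set.InjOn block N.primeFactors :=
    Set.injOn_of_ncard_image_eq (by rw [himage, Set.ncard_coe_finset, hcard])
  exact hinj hp hq ((block_eq hpi).trans (block_eq hqi).symm)

theorem exists_eq_prime_pow_of_isSigmaPrimary (hσ : IsPrimePartition σ) {N m : ℕ}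
    (hN : N ≠ 0) (hcard : N.primeFactors.card = (sigmaClasses σ N).ncard) (hmN : m ∣ N)
    (hm : IsSigmaPrimary σ m) : ∃ p k, p.Prime ∧ m = p ^ k := by
  rcases hm with rfl | hm
  · exact ⟨2, 0, Nat.prime_two, rfl⟩
  obtain ⟨i, hi⟩ := Set.ncard_eq_one.mp hm
  obtain ⟨p, hpi, hp, hpm⟩ : i ∈ sigmaClasses σ m := hi ▸ rfl
  have hm0 : m ≠ 0 := ne_zero_of_dvd_ne_zero hN hmN
  have mem_σi : ∀ {r}, r.Prime → r ∣ m → r ∈ σ i := fun hr hrm => by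
    obtain ⟨j, hj, -⟩ := hσ.2 _ hr
    have hjm : j ∈ sigmaClasses σ m := ⟨_, hj, hr, hrm⟩
    rw [hi, Set.mem_singleton_iff] at hjm
    exact hjm ▸ hj
  refine ⟨p, _, hp, Nat.eq_prime_pow_of_unique_prime_dvd hm0 fun hr hrm => ?_⟩
  exact hσ.eq_of_mem_of_card_primeFactors_eq hcard
    (Nat.mem_primeFactors.mpr ⟨hr, hrm.trans hmN, hN⟩)
    (Nat.mem_primeFactors.mpr ⟨hp, hpm.trans hmN, hN⟩) (mem_σi hr hrm) hpi

end IsPrimePartition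

/-- If `|π(G)| = |σ(G)|` and `H` is `σ`-subnormal in `G`, then `H` is subnormal in `G`. -/
theorem subnormal_of_sigmaSubnormal
    {ι : Type*} (σ : ι → Set ℕ) (hσ : IsPrimePartition σ)
    (G : Type*) [Group G] [Finite G]
    (hcard : (Nat.card G).primeFactors.card = (sigmaClasses σ (Nat.card G)).ncard)
    (H : Subgroup G) (hH : IsSigmaSubnormal σ H) :
    IsSubnormalSubgroup H := by
  obtain ⟨t, c, hmono, rfl, hlast, hstep⟩ := hH
  suffices ∀ i, (c i).IsSubnormal from (this 0).isSubnormalSubgroup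
  refine Fin.reverseInduction (hlast ▸ .top) fun i hsucc => ?_
  refine IsSubnormal.trans (hmono (Fin.castSucc_le_succ i)) ?_ hsucc
  rcases hstep i with hnormal | hprimary
  · exact hnormal.isSubnormal
  · have hdvd : Nat.card (c i.succ ⧸ ((c i.castSucc).subgroupOf (c i.succ)).normalCore) ∣
        Nat.card G :=
      (index_dvd_card _).trans (card_subgroup_dvd_card _)
    obtain ⟨p, k, hp, hpk⟩ :=
      hσ.exists_eq_prime_pow_of_isSigmaPrimary Nat.card_pos.ne' hcard hdvd hprimary
    exact isSubnormal_subgroupOf_of_card_quotient_normalCore hp hpk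
end

section
/- Let σ be a partition of the set of all primes and G a finite σ-soluble group. If M is a maximal subgroup of G, then the index |G:M| is σ-primary, i.e. all primes dividing |G:M| lie in a single member σ_i of σ. -/
open Subgroup Pointwise

/-!
Let `K` be the core of the maximal subgroup `M` and `N/K` a chief factor of `G`. Then `N ≰ M`,
so `MN = G` and `|G : M| = |N : N ∩ M|`, which divides `|N : K|`. A divisor of a `σ`-primary
number is `σ`-primary.
-/

section SigmaPrimary

variable {ι : Type*} {σ : ι → Set ℕ}

theorem sigmaClasses_mono {m n : ℕ} (hmn : m ∣ n) : sigmaClasses σ m ⊆ sigmaClasses σ n :=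
  fun _ ⟨p, hpσ, hp, hpm⟩ => ⟨p, hpσ, hp, hpm.trans hmn⟩

theorem sigmaClasses_nonempty (hσ : IsPrimePartition σ) {m : ℕ} (hm : m ≠ 1) :
    (sigmaClasses σ m).Nonempty := by
  obtain ⟨p, hp, hpm⟩ := Nat.exists_prime_and_dvd hm
  obtain ⟨i, hi, -⟩ := hσ.2 p hp
  exact ⟨i, p, hi, hp, hpm⟩

theorem IsSigmaPrimary.of_dvd (hσ : IsPrimePartition σ) {m n : ℕ} (hn : IsSigmaPrimary σ n)
    (hmn : m ∣ n) : IsSigmaPrimary σ m := by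
  rcases eq_or_ne m 1 with rfl | hm
  · exact Or.inl rfl
  rcases hn with rfl | hn
  · exact absurd (Nat.dvd_one.mp hmn) hm
  obtain ⟨i, hi⟩ := Set.ncard_eq_one.mp hn
  right
  rw [((sigmaClasses_nonempty hσ hm).subset_singleton_iff.mp (hi ▸ sigmaClasses_mono hmn)),
    Set.ncard_singleton]

end SigmaPrimary

namespace Subgroup

variable {G : Type*} [Group G]

theorem exists_isChiefFactor [Finite G] {K : Subgroup G} [K.Normal] (hK : K ≠ ⊤) :
    ∃ N, IsChiefFactor K N := by
  obtain ⟨N, ⟨hN, hKN⟩, hmin⟩ := (Set.toFinite {N : Subgroup G | N.Normal ∧ K < N}).exists_minimal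
    ⟨⊤, inferInstance, hK.lt_top⟩
  refine ⟨N, inferInstance, hN, hKN, fun L hL hKL hLN => ?_⟩
  rcases hKL.eq_or_lt with rfl | hKL
  · exact Or.inl rfl
  · exact Or.inr (le_antisymm hLN (hmin ⟨hL, hKL⟩ hLN))

theorem index_eq_relIndex_of_sup_eq_top {H N : Subgroup G} [N.Normal] [N.FiniteIndex]
    (hHN : H ⊔ N = ⊤) : H.index = H.relIndex N := by
  have hN : N.relIndex H = N.index := by
    rw [← relIndex_sup_right, hHN, relIndex_top_right]
  refine Nat.eq_of_mul_eq_mul_left (Nat.pos_of_ne_zero (FiniteIndex.index_ne_zero (H := N))) ?_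
  calc N.index * H.index
      = (N ⊓ H).index := by rw [← hN, ← inf_relIndex_right, relIndex_mul_index inf_le_right]
    _ = N.index * H.relIndex N := by
      rw [← inf_relIndex_right H N, mul_comm, relIndex_mul_index inf_le_right, inf_comm]

end Subgroup

/-- If `M` is a maximal subgroup of a finite `σ`-soluble group `G`, then `|G : M|` is
`σ`-primary. -/
theorem index_sigmaPrimary_of_maximal
    {ι : Type*} (σ : ι → Set ℕ) (hσ : IsPrimePartition σ)
    (G : Type*) [Group G] [Finite G] (hsol : IsSigmaSoluble σ G)
    (M : Subgroup G) (hM : IsCoatom M) :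
    IsSigmaPrimary σ M.index := by
  obtain ⟨N, hchief⟩ := exists_isChiefFactor (M.normalCore_le.trans_lt hM.lt_top).ne
  have : N.Normal := hchief.2.1
  have hNM : ¬ N ≤ M := fun h => hchief.2.2.1.not_ge (normal_le_normalCore.mpr h)
  have hMN : M ⊔ N = ⊤ := hM.2 _ (left_lt_sup.mpr hNM)
  refine (hsol _ _ hchief).of_dvd hσ ?_
  rw [index_eq_relIndex_of_sup_eq_top hMN]
  exact relIndex_dvd_of_le_left N M.normalCore_le
end

section
/- Fix a linear ordering φ of the set of all primes. The class of finite φ-dispersive groups is a saturated formation: (i) every homomorphic image of a φ-dispersive group is φ-dispersive; (ii) if N_1 and N_2 are normal subgroups of a finite group G with N_1 ∩ N_2 = 1 and both G/N_1 and G/N_2 are φ-dispersive, then G is φ-dispersive; (iii) if G/Φ(G) is φ-dispersive, where Φ(G) is the Frattini subgroup of G, then G is φ-dispersive. -/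
open Subgroup Pointwise

/-- `r` is a (strict) linear ordering of the set of all primes, where `r a b` means
`a <_φ b`. -/
def IsPrimeOrdering (r : ℕ → ℕ → Prop) : Prop :=
  (∀ p : ℕ, Nat.Prime p → ¬r p p) ∧
  (∀ p q s : ℕ, Nat.Prime p → Nat.Prime q → Nat.Prime s → r p q → r q s → r p s) ∧
  ∀ p q : ℕ, Nat.Prime p → Nat.Prime q → p ≠ q → r p q ∨ r q p

/-- `G` is `φ`-dispersive for the ordering `r` of the primes (`r a b` meaning `a <_φ b`):
if `p 0 >_φ p 1 >_φ ⋯ >_φ p (t-1)` are the primes dividing `|G|` listed in decreasing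
`φ`-order, then `G` has a normal series `⊥ = c 0 < ⋯ < c (Fin.last t) = ⊤` such that
`c i.succ / c i.castSucc` is isomorphic to a Sylow `p i`-subgroup of `G` for each `i`. -/
def IsPhiDispersive (r : ℕ → ℕ → Prop) (G : Type*) [Group G] : Prop :=
  ∃ (t : ℕ) (p : Fin t → ℕ) (c : Fin (t + 1) → Subgroup G) (hc : ∀ i, (c i).Normal),
    (∀ q : ℕ, q ∈ (Nat.card G).primeFactors ↔ ∃ i, p i = q) ∧
    (∀ i j : Fin t, i < j → r (p j) (p i)) ∧
    StrictMono c ∧ c 0 = ⊥ ∧ c (Fin.last t) = ⊤ ∧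
    ∀ i : Fin t,
      haveI := Subgroup.Normal.subgroupOf (hc i.castSucc) (c i.succ)
      ∃ P : Sylow (p i) G,
        Nonempty ((↥(c i.succ) ⧸ (c i.castSucc).subgroupOf (c i.succ)) ≃* ↥(P : Subgroup G))

/-!
A finite group is `φ`-dispersive exactly when, for every prime `p` dividing its order, it has a
normal Hall subgroup for the primes `φ`-above or equal to `p`: the terms of the series are these
Hall subgroups, in order. Normal Hall `π`-subgroups pass to homomorphic images and, through the
embedding `G → G/N₁ × G/N₂`, to subdirect products; this gives (i) and (ii).
For (iii), let `p` be the `φ`-largest prime divisor of `|G|`. The Hall subgroup of `G/Φ(G)` for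
`p` is a normal Sylow `p`-subgroup, and the Frattini argument lifts it to a normal Sylow
`p`-subgroup `P` of `G`. As `(G/P)/Φ(G/P)` is an image of `G/Φ(G)`, the group `G/P` is
`φ`-dispersive by induction, and `P` followed by the preimage of its series is a series for `G`.
-/

theorem Fin.exists_castSucc_lt_iff_of_isLowerSet {t : ℕ} {s : Set (Fin t)} (hs : IsLowerSet s) :
    ∃ k : Fin (t + 1), ∀ i, i ∈ s ↔ i.castSucc < k := by
  by_cases h : ∀ i, i ∈ s
  · exact ⟨Fin.last t, fun i => iff_of_true (h i) i.castSucc_lt_last⟩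
  push Not at h
  obtain ⟨k, hk, hmin⟩ := wellFounded_lt.has_min sᶜ h
  refine ⟨k.castSucc, fun i => ⟨fun hi => ?_, fun hi => ?_⟩⟩
  · rw [Fin.castSucc_lt_castSucc_iff]
    by_contra hle
    exact hk (hs (not_lt.1 hle) hi)
  · by_contra hni
    exact hmin i hni (Fin.castSucc_lt_castSucc_iff.1 hi)

namespace Subgroup

variable {G G' : Type*} [Group G] [Group G']

structure IsNormalHall (π : Set ℕ) (H : Subgroup G) : Prop where
  normal : H.Normal
  prime_dvd_card : ∀ q, q.Prime → q ∣ Nat.card H → q ∈ π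
  prime_dvd_index : ∀ q, q.Prime → q ∣ H.index → q ∉ π

namespace IsNormalHall

variable {π : Set ℕ} {H K : Subgroup G}

theorem le (hH : IsNormalHall π H) (hK : ∀ q, q.Prime → q ∣ Nat.card K → q ∈ π) : K ≤ H := by
  have := hH.normal
  suffices K.map (QuotientGroup.mk' H) = ⊥ by
    rwa [map_eq_bot_iff, QuotientGroup.ker_mk'] at this
  rw [← card_eq_one]
  by_contra hne
  obtain ⟨q, hq, hqd⟩ := Nat.exists_prime_and_dvd hne
  refine hH.prime_dvd_index q hq ?_ (hK q hq (hqd.trans (card_map_dvd _ _)))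
  rw [index_eq_card]
  exact hqd.trans (card_subgroup_dvd_card _)

theorem congr {π' : Set ℕ} (hH : IsNormalHall π H)
    (h : ∀ q, q.Prime → q ∣ Nat.card G → (q ∈ π ↔ q ∈ π')) : IsNormalHall π' H where
  normal := hH.normal
  prime_dvd_card q hq hd :=
    (h q hq (hd.trans (card_subgroup_dvd_card H))).1 (hH.prime_dvd_card q hq hd)
  prime_dvd_index q hq hd :=
    mt (h q hq (hd.trans H.index_dvd_card)).2 (hH.prime_dvd_index q hq hd)

theorem prime_dvd_card_of_mem {q : ℕ} (hH : IsNormalHall π H) (hq : q.Prime) (hqπ : q ∈ π)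
    (hqG : q ∣ Nat.card G) : q ∣ Nat.card H := by
  rw [← H.card_mul_index] at hqG
  exact (hq.dvd_mul.1 hqG).resolve_right fun h => hH.prime_dvd_index q hq h hqπ

theorem eq_bot (hH : IsNormalHall π H) (hπ : ∀ q, q.Prime → q ∣ Nat.card G → q ∉ π) :
    H = ⊥ := by
  refine card_eq_one.1 (by_contra fun hne => ?_)
  obtain ⟨q, hq, hd⟩ := Nat.exists_prime_and_dvd hne
  exact hπ q hq (hd.trans (card_subgroup_dvd_card H)) (hH.prime_dvd_card q hq hd)

theorem eq_top (hH : IsNormalHall π H) (hπ : ∀ q, q.Prime → q ∣ Nat.card G → q ∈ π) :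
    H = ⊤ := by
  refine index_eq_one.1 (by_contra fun hne => ?_)
  obtain ⟨q, hq, hd⟩ := Nat.exists_prime_and_dvd hne
  exact hH.prime_dvd_index q hq hd (hπ q hq (hd.trans H.index_dvd_card))

theorem map (hH : IsNormalHall π H) {f : G →* G'} (hf : Function.Surjective f) :
    IsNormalHall π (H.map f) where
  normal := hH.normal.map f hf
  prime_dvd_card q hq hd := hH.prime_dvd_card q hq (hd.trans (card_map_dvd _ _))
  prime_dvd_index q hq hd := hH.prime_dvd_index q hq (hd.trans (index_map_dvd _ hf))

theorem comap_of_injective {A : Subgroup G'} (hA : IsNormalHall π A) {f : G →* G'}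
    (hf : Function.Injective f) : IsNormalHall π (A.comap f) where
  normal := hA.normal.comap f
  prime_dvd_card q hq hd :=
    hA.prime_dvd_card q hq (hd.trans (card_comap_dvd_of_injective A f hf))
  prime_dvd_index q hq hd := by
    have := hA.normal
    rw [index_comap] at hd
    exact hA.prime_dvd_index q hq (hd.trans (relIndex_dvd_index_of_normal _ _))

theorem prod {A : Subgroup G} {B : Subgroup G'} (hA : IsNormalHall π A) (hB : IsNormalHall π B) :
    IsNormalHall π (A.prod B) where
  normal := by have := hA.normal; have := hB.normal; infer_instance
  prime_dvd_card q hq hd := by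
    rw [Nat.card_congr (prodEquiv A B).toEquiv, Nat.card_prod] at hd
    exact (hq.dvd_mul.1 hd).elim (hA.prime_dvd_card q hq) (hB.prime_dvd_card q hq)
  prime_dvd_index q hq hd := by
    rw [index_prod] at hd
    exact (hq.dvd_mul.1 hd).elim (hA.prime_dvd_index q hq) (hB.prime_dvd_index q hq)

theorem comap_mk' {N : Subgroup G} [N.Normal] {B : Subgroup (G ⧸ N)} (hB : IsNormalHall π B)
    (hN : ∀ q, q.Prime → q ∣ Nat.card N → q ∈ π) :
    IsNormalHall π (B.comap (QuotientGroup.mk' N)) where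
  normal := hB.normal.comap _
  prime_dvd_card q hq hd := by
    rw [show Nat.card (B.comap (QuotientGroup.mk' N)) = Nat.card N * Nat.card B from
      QuotientGroup.card_preimage_mk N B] at hd
    exact (hq.dvd_mul.1 hd).elim (hN q hq) (hB.prime_dvd_card q hq)
  prime_dvd_index q hq hd := by
    rw [index_comap_of_surjective _ (QuotientGroup.mk'_surjective N)] at hd
    exact hB.prime_dvd_index q hq hd

end IsNormalHall

theorem card_mul_relIndex {H K : Subgroup G} (h : H ≤ K) :
    Nat.card H * H.relIndex K = Nat.card K := by
  rw [← relIndex_bot_left, ← relIndex_bot_left, relIndex_mul_relIndex _ _ _ bot_le h]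

theorem IsNormalHall.nonempty_quotient_mulEquiv_sylow [Finite G] {π : Set ℕ} {p : ℕ}
    [hp : Fact p.Prime] {A B : Subgroup G} (hA : IsNormalHall π A)
    (hB : IsNormalHall (insert p π) B) (hpπ : p ∉ π) :
    haveI := hA.normal.subgroupOf B
    ∃ P : Sylow p G, Nonempty ((B ⧸ A.subgroupOf B) ≃* P) := by
  have := hA.normal.subgroupOf B
  obtain ⟨P⟩ : Nonempty (Sylow p G) := inferInstance
  have hAB : A ≤ B := hB.le fun q hq hd => Or.inr (hA.prime_dvd_card q hq hd)
  have hPB : (P : Subgroup G) ≤ B := hB.le fun q hq hd => by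
    rw [P.card_eq_multiplicity] at hd
    exact Or.inl ((Nat.prime_dvd_prime_iff_eq hq hp.out).1 (hq.dvd_of_dvd_pow hd))
  have hPA : Disjoint (P : Subgroup G) A := by
    refine disjoint_of_coprime_natCard ?_
    rw [P.card_eq_multiplicity]
    exact (hp.out.coprime_iff_not_dvd.2 fun h => hpπ (hA.prime_dvd_card p hp.out h)).pow_left _
  let f : P →* B ⧸ A.subgroupOf B := (QuotientGroup.mk' _).comp (inclusion hPB)
  have hf : Function.Injective f := by
    refine (injective_iff_map_eq_one f).2 fun x hx => ?_
    exact Subtype.ext (disjoint_def.1 hPA x.2 (by simpa [f, mem_subgroupOf] using hx))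
  have hquot : ∀ {q}, q.Prime → q ∣ A.relIndex B → q = p := fun {q} hq hd =>
    (hB.prime_dvd_card q hq (hd.trans (relIndex_dvd_card A B))).resolve_right
      (hA.prime_dvd_index q hq (hd.trans (relIndex_dvd_index_of_le hAB)))
  have hcard : Nat.card P = A.relIndex B := by
    have hne : A.relIndex B ≠ 0 :=
      (Nat.pos_of_dvd_of_pos (relIndex_dvd_card A B) Nat.card_pos).ne'
    refine Nat.dvd_antisymm (card_dvd_of_injective f hf) ?_
    rw [Nat.eq_prime_pow_of_unique_prime_dvd hne hquot]
    refine P.pow_dvd_card_of_pow_dvd_card ?_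
    rw [← Nat.eq_prime_pow_of_unique_prime_dvd hne hquot]
    exact (relIndex_dvd_card A B).trans (card_subgroup_dvd_card B)
  exact ⟨P, ⟨(MulEquiv.ofBijective f ((Nat.bijective_iff_injective_and_card f).2
    ⟨hf, hcard⟩)).symm⟩⟩

theorem IsNormalHall.exists_sylow_normal [Finite G] {π : Set ℕ} {p : ℕ} [Fact p.Prime]
    {H : Subgroup G} (hH : IsNormalHall π H) (hp : p ∈ π)
    (hπ : ∀ q, q.Prime → q ∣ Nat.card G → q ∈ π → q = p) :
    ∃ P : Sylow p G, (P : Subgroup G).Normal := by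
  have hpH : IsPGroup p H := IsPGroup.of_card (Nat.eq_prime_pow_of_unique_prime_dvd
    Nat.card_pos.ne' fun hq hd => hπ _ hq (hd.trans (card_subgroup_dvd_card H))
      (hH.prime_dvd_card _ hq hd))
  exact ⟨hpH.toSylow fun hd => hH.prime_dvd_index p Fact.out hd hp, by
    simpa using hH.normal⟩

variable {t : ℕ} {c : Fin (t + 1) → Subgroup G} {q : ℕ}

theorem exists_dvd_relIndex_of_dvd_card (hc : Monotone c) (h0 : c 0 = ⊥) (hq : q.Prime)
    (k : Fin (t + 1)) (hk : q ∣ Nat.card (c k)) :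
    ∃ i : Fin t, i.castSucc < k ∧ q ∣ (c i.castSucc).relIndex (c i.succ) := by
  induction k using Fin.induction with
  | zero => simp [h0, hq.ne_one] at hk
  | succ i ih =>
    rw [← card_mul_relIndex (hc i.castSucc_le_succ)] at hk
    rcases hq.dvd_mul.1 hk with hk | hk
    · obtain ⟨j, hj, hd⟩ := ih hk
      exact ⟨j, hj.trans i.castSucc_lt_succ, hd⟩
    · exact ⟨i, i.castSucc_lt_succ, hk⟩

theorem exists_dvd_relIndex_of_dvd_index (hc : Monotone c) (hlast : c (Fin.last t) = ⊤)
    (hq : q.Prime) (k : Fin (t + 1)) (hk : q ∣ (c k).index) :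
    ∃ i : Fin t, k ≤ i.castSucc ∧ q ∣ (c i.castSucc).relIndex (c i.succ) := by
  induction k using Fin.reverseInduction with
  | last => simp [hlast, hq.ne_one] at hk
  | cast i ih =>
    rw [← relIndex_mul_index (hc i.castSucc_le_succ)] at hk
    rcases hq.dvd_mul.1 hk with hk | hk
    · exact ⟨i, le_rfl, hk⟩
    · obtain ⟨j, hj, hd⟩ := ih hk
      exact ⟨j, i.castSucc_lt_succ.le.trans hj, hd⟩

theorem isNormalHall_of_series {p : Fin t → ℕ} (hp : Function.Injective p) (hc : ∀ k, (c k).Normal)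
    (hmono : Monotone c) (h0 : c 0 = ⊥) (hlast : c (Fin.last t) = ⊤)
    (hfac : ∀ i q, q.Prime → q ∣ (c i.castSucc).relIndex (c i.succ) → q = p i)
    (k : Fin (t + 1)) : IsNormalHall (p '' {j | j.castSucc < k}) (c k) where
  normal := hc k
  prime_dvd_card q hq hd := by
    obtain ⟨i, hik, hdi⟩ := exists_dvd_relIndex_of_dvd_card hmono h0 hq k hd
    exact ⟨i, hik, (hfac i q hq hdi).symm⟩
  prime_dvd_index q hq hd := by
    obtain ⟨i, hki, hdi⟩ := exists_dvd_relIndex_of_dvd_index hmono hlast hq k hd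
    rintro ⟨j, hjk, rfl⟩
    rw [hp (hfac i _ hq hdi)] at hjk
    exact (hjk.trans_le hki).false

end Subgroup

theorem Sylow.normal_of_normal_quotient_frattini {G : Type*} [Group G] [Finite G] {p : ℕ}
    [Fact p.Prime] (Q : Sylow p (G ⧸ frattini G)) (hQ : (Q : Subgroup (G ⧸ frattini G)).Normal)
    (P : Sylow p G) : (P : Subgroup G).Normal := by
  have := Sylow.unique_of_normal Q hQ
  have hK : (Q : Subgroup (G ⧸ frattini G)).comap (QuotientGroup.mk' (frattini G)) =
      (P : Subgroup G) ⊔ frattini G := by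
    rw [← Subsingleton.elim (P.mapSurjective (QuotientGroup.mk'_surjective _)) Q,
      Sylow.coe_mapSurjective, comap_map_eq, QuotientGroup.ker_mk']
  have : ((P : Subgroup G) ⊔ frattini G).Normal := hK ▸ hQ.comap _
  -- Frattini argument: `N_G(P) ⊔ P Φ(G) = G`, so `N_G(P) ⊔ Φ(G) = G`.
  have htop := P.normalizer_sup_eq_top' (N := (P : Subgroup G) ⊔ frattini G) le_sup_left
  rw [← sup_assoc, ← P.coe_coe, sup_eq_left.2 le_normalizer] at htop
  exact normalizer_eq_top_iff.1 (frattini_nongenerating htop)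

def phiUpperSet (r : ℕ → ℕ → Prop) (p : ℕ) : Set ℕ := {q | q = p ∨ r p q}

namespace IsPrimeOrdering

variable {r : ℕ → ℕ → Prop} (hr : IsPrimeOrdering r) {p q s : ℕ}
include hr

theorem asymm (hp : p.Prime) (hq : q.Prime) (h : r p q) : ¬ r q p :=
  fun h' => hr.1 p hp (hr.2.1 p q p hp hq hp h h')

theorem eq_of_mem_phiUpperSet (hp : p.Prime) (hq : q.Prime) (hpq : q ∈ phiUpperSet r p)
    (hqp : p ∈ phiUpperSet r q) : q = p := by
  rcases hpq with h | h
  · exact h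
  rcases hqp with h' | h'
  · exact h'.symm
  exact absurd h' (hr.asymm hp hq h)

theorem mem_phiUpperSet_trans (hp : p.Prime) (hq : q.Prime) (hs : s.Prime)
    (hpq : q ∈ phiUpperSet r p) (hqs : s ∈ phiUpperSet r q) : s ∈ phiUpperSet r p := by
  rcases hpq with rfl | hpq
  · exact hqs
  rcases hqs with rfl | hqs
  · exact Or.inr hpq
  exact Or.inr (hr.2.1 p q s hp hq hs hpq hqs)

theorem mem_phiUpperSet_iff_le {t : ℕ} {p : Fin t → ℕ} (hprime : ∀ i, (p i).Prime)
    (hord : ∀ i j, i < j → r (p j) (p i)) {i j : Fin t} :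
    p j ∈ phiUpperSet r (p i) ↔ j ≤ i := by
  refine ⟨fun h => not_lt.1 fun hij => ?_, fun h => ?_⟩
  · rcases h with h | h
    · exact hr.1 _ (hprime j) (h ▸ hord i j hij)
    · exact hr.asymm (hprime i) (hprime j) h (hord i j hij)
  · rcases h.eq_or_lt with rfl | h
    · exact Or.inl rfl
    · exact Or.inr (hord j i h)

theorem injective_of_strictAnti {t : ℕ} {p : Fin t → ℕ} (hprime : ∀ i, (p i).Prime)
    (hord : ∀ i j, i < j → r (p j) (p i)) : Function.Injective p := fun _ _ hij =>
  le_antisymm ((hr.mem_phiUpperSet_iff_le hprime hord).1 (Or.inl hij))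
    ((hr.mem_phiUpperSet_iff_le hprime hord).1 (Or.inl hij.symm))

theorem exists_strictAnti_enum (F : Finset ℕ) (hF : ∀ q ∈ F, q.Prime) :
    ∃ (t : ℕ) (p : Fin t → ℕ), (∀ q, q ∈ F ↔ ∃ i, p i = q) ∧
      ∀ i j, i < j → r (p j) (p i) := by
  classical
  let gt : F → F → Prop := fun a b => r b a
  have : IsStrictTotalOrder F gt :=
    { trichotomous := fun a b hab hba => by
        by_contra hne
        rcases hr.2.2 a b (hF a a.2) (hF b b.2) (fun h => hne (Subtype.ext h)) with h | h
        · exact hba h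
        · exact hab h
      irrefl := fun a => hr.1 a (hF a a.2)
      trans := fun a b c hab hbc => hr.2.1 c b a (hF c c.2) (hF b b.2) (hF a a.2) hbc hab }
  let := linearOrderOfSTO gt
  let e := (Finset.univ : Finset F).orderEmbOfFin rfl
  refine ⟨_, fun i => e i, fun q => ⟨fun hq => ?_, ?_⟩, fun i j hij => ?_⟩
  · obtain ⟨i, hi⟩ : (⟨q, hq⟩ : F) ∈ Set.range e := by
      rw [Finset.range_orderEmbOfFin]; exact Finset.mem_coe.2 (Finset.mem_univ _)
    exact ⟨i, congrArg Subtype.val hi⟩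
  · rintro ⟨i, rfl⟩
    exact (e i).2
  · -- `F` also carries the order of `ℕ`, so the order to use must be named.
    exact @OrderEmbedding.strictMono _ _ _ (linearOrderOfSTO gt).toPreorder e _ _ hij

theorem exists_forall_mem_phiUpperSet (F : Finset ℕ) (hF : ∀ q ∈ F, q.Prime) (hne : F.Nonempty) :
    ∃ p ∈ F, ∀ q ∈ F, p ∈ phiUpperSet r q := by
  obtain ⟨t, p, hpF, hord⟩ := hr.exists_strictAnti_enum F hF
  have hprime : ∀ i, (p i).Prime := fun i => hF _ ((hpF _).2 ⟨i, rfl⟩)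
  obtain ⟨i₀, -⟩ := (hpF _).1 hne.choose_spec
  refine ⟨p ⟨0, i₀.pos⟩, (hpF _).2 ⟨_, rfl⟩, fun q hq => ?_⟩
  obtain ⟨j, rfl⟩ := (hpF q).1 hq
  exact (hr.mem_phiUpperSet_iff_le hprime hord).2 (Nat.zero_le j)

end IsPrimeOrdering

variable {r : ℕ → ℕ → Prop} {G : Type*} [Group G] [Finite G]

theorem isPhiDispersive_of_isNormalHall_series (hr : IsPrimeOrdering r) {t : ℕ} {p : Fin t → ℕ}
    (hpG : ∀ q, q ∈ (Nat.card G).primeFactors ↔ ∃ i, p i = q)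
    (hord : ∀ i j, i < j → r (p j) (p i)) {c : Fin (t + 1) → Subgroup G}
    (hc : ∀ k, IsNormalHall (p '' {j | j.castSucc < k}) (c k)) : IsPhiDispersive r G := by
  have hmem : ∀ i, p i ∈ (Nat.card G).primeFactors := fun i => (hpG _).2 ⟨i, rfl⟩
  have hprime : ∀ i, (p i).Prime := fun i => Nat.prime_of_mem_primeFactors (hmem i)
  have hinj := hr.injective_of_strictAnti hprime hord
  have hnew : ∀ i : Fin t, p i ∉ p '' {j | j.castSucc < i.castSucc} := fun i h =>
    lt_irrefl i.castSucc (hinj.mem_set_image.1 h : i ∈ {j : Fin t | j.castSucc < i.castSucc})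
  have hsucc : ∀ i : Fin t,
      p '' {j | j.castSucc < i.succ} = insert (p i) (p '' {j | j.castSucc < i.castSucc}) := by
    intro i
    ext q
    simp only [Set.mem_image, Set.mem_ofPred_eq, Set.mem_insert_iff, Fin.castSucc_lt_succ_iff,
      Fin.castSucc_lt_castSucc_iff, le_iff_eq_or_lt, or_and_right, exists_or, exists_eq_left]
    exact ⟨fun h => h.imp (·.symm) id, fun h => h.imp (·.symm) id⟩
  have h0 : c 0 = ⊥ := (hc 0).eq_bot fun _ _ _ ⟨_, hj, _⟩ => Fin.not_lt_zero _ hj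
  have hlast : c (Fin.last t) = ⊤ := (hc _).eq_top fun q hq hqG => by
    obtain ⟨j, rfl⟩ := (hpG q).1 (Nat.mem_primeFactors_of_ne_zero Nat.card_pos.ne' |>.2 ⟨hq, hqG⟩)
    exact ⟨j, j.castSucc_lt_last, rfl⟩
  have hstrict : StrictMono c := by
    refine Fin.strictMono_iff_lt_succ.2 fun i => lt_of_le_of_ne ?_ fun heq => ?_
    · refine (hc i.succ).le fun q hq hd => ?_
      obtain ⟨j, hj, rfl⟩ := (hc i.castSucc).prime_dvd_card q hq hd
      exact ⟨j, hj.trans i.castSucc_lt_succ, rfl⟩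
    · have hdvd := (hc i.succ).prime_dvd_card_of_mem (hprime i) ⟨i, i.castSucc_lt_succ, rfl⟩
        (Nat.dvd_of_mem_primeFactors (hmem i))
      rw [← heq] at hdvd
      exact hnew i ((hc i.castSucc).prime_dvd_card _ (hprime i) hdvd)
  refine ⟨t, p, c, fun k => (hc k).normal, hpG, hord, hstrict, h0, hlast, fun i => ?_⟩
  have := Fact.mk (hprime i)
  exact (hc i.castSucc).nonempty_quotient_mulEquiv_sylow (hsucc i ▸ hc i.succ) (hnew i)

theorem IsPhiDispersive.exists_isNormalHall (hr : IsPrimeOrdering r) (h : IsPhiDispersive r G)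
    {p : ℕ} (hp : p.Prime) : ∃ H : Subgroup G, IsNormalHall (phiUpperSet r p) H := by
  obtain ⟨t, ps, c, hc, hpG, hord, hmono, h0, hlast, hfac⟩ := h
  have hprime : ∀ i, (ps i).Prime := fun i =>
    Nat.prime_of_mem_primeFactors ((hpG _).2 ⟨i, rfl⟩)
  have hinj := hr.injective_of_strictAnti hprime hord
  have hfac' : ∀ i q, q.Prime → q ∣ (c i.castSucc).relIndex (c i.succ) → q = ps i := by
    intro i q hq hd
    have := Fact.mk (hprime i)
    obtain ⟨P, ⟨e⟩⟩ := hfac i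
    rw [relIndex, index_eq_card, Nat.card_congr e.toEquiv, P.card_eq_multiplicity] at hd
    exact (Nat.prime_dvd_prime_iff_eq hq (hprime i)).1 (hq.dvd_of_dvd_pow hd)
  obtain ⟨k, hk⟩ := Fin.exists_castSucc_lt_iff_of_isLowerSet (s := {j | ps j ∈ phiUpperSet r p})
    fun j i hij hj => hij.eq_or_lt.elim (fun h => h ▸ hj) fun h =>
      hr.mem_phiUpperSet_trans hp (hprime j) (hprime i) hj (Or.inr (hord i j h))
  refine ⟨c k, (isNormalHall_of_series hinj hc hmono.monotone h0 hlast hfac' k).congr ?_⟩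
  intro q hq hqG
  obtain ⟨j, rfl⟩ := (hpG q).1 (Nat.mem_primeFactors_of_ne_zero Nat.card_pos.ne' |>.2 ⟨hq, hqG⟩)
  exact hinj.mem_set_image.trans (hk j).symm

theorem isPhiDispersive_of_forall_isNormalHall (hr : IsPrimeOrdering r)
    (h : ∀ p ∈ (Nat.card G).primeFactors, ∃ H : Subgroup G, IsNormalHall (phiUpperSet r p) H) :
    IsPhiDispersive r G := by
  obtain ⟨t, p, hpG, hord⟩ :=
    hr.exists_strictAnti_enum (Nat.card G).primeFactors fun _ => Nat.prime_of_mem_primeFactors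
  have hmem : ∀ i, p i ∈ (Nat.card G).primeFactors := fun i => (hpG _).2 ⟨i, rfl⟩
  have hprime : ∀ i, (p i).Prime := fun i => Nat.prime_of_mem_primeFactors (hmem i)
  have hinj := hr.injective_of_strictAnti hprime hord
  have : ∀ k : Fin (t + 1), ∃ H : Subgroup G, IsNormalHall (p '' {j | j.castSucc < k}) H := by
    refine Fin.cases ⟨⊥, ⟨normal_bot, fun q hq hd => ?_, fun q _ _ ⟨j, hj, _⟩ => ?_⟩⟩ fun i => ?_
    · rw [card_bot] at hd
      exact absurd (Nat.dvd_one.1 hd) hq.ne_one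
    · exact Fin.not_lt_zero _ hj
    obtain ⟨H, hH⟩ := h (p i) (hmem i)
    refine ⟨H, hH.congr fun q hq hqG => ?_⟩
    obtain ⟨j, rfl⟩ := (hpG q).1 (Nat.mem_primeFactors_of_ne_zero Nat.card_pos.ne' |>.2 ⟨hq, hqG⟩)
    rw [hr.mem_phiUpperSet_iff_le hprime hord, hinj.mem_set_image]
    exact Fin.castSucc_lt_succ_iff.symm
  choose c hc using this
  exact isPhiDispersive_of_isNormalHall_series hr hpG hord hc

theorem IsPhiDispersive.of_surjective (hr : IsPrimeOrdering r) (hG : IsPhiDispersive r G)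
    {H : Type*} [Group H] {f : G →* H} (hf : Function.Surjective f) : IsPhiDispersive r H := by
  have : Finite H := Finite.of_surjective f hf
  refine isPhiDispersive_of_forall_isNormalHall hr fun p hp => ?_
  obtain ⟨K, hK⟩ := hG.exists_isNormalHall hr (Nat.prime_of_mem_primeFactors hp)
  exact ⟨_, hK.map hf⟩

theorem isPhiDispersive_of_inf_eq_bot (hr : IsPrimeOrdering r) {N₁ N₂ : Subgroup G} [N₁.Normal]
    [N₂.Normal] (hN : N₁ ⊓ N₂ = ⊥) (h₁ : IsPhiDispersive r (G ⧸ N₁))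
    (h₂ : IsPhiDispersive r (G ⧸ N₂)) : IsPhiDispersive r G := by
  have hinj : Function.Injective ((QuotientGroup.mk' N₁).prod (QuotientGroup.mk' N₂)) := by
    rw [← MonoidHom.ker_eq_bot_iff, MonoidHom.ker_prod, QuotientGroup.ker_mk',
      QuotientGroup.ker_mk', hN]
  refine isPhiDispersive_of_forall_isNormalHall hr fun p hp => ?_
  obtain ⟨A₁, hA₁⟩ := h₁.exists_isNormalHall hr (Nat.prime_of_mem_primeFactors hp)
  obtain ⟨A₂, hA₂⟩ := h₂.exists_isNormalHall hr (Nat.prime_of_mem_primeFactors hp)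
  exact ⟨_, (hA₁.prod hA₂).comap_of_injective hinj⟩

theorem isPhiDispersive_of_normal_sylow (hr : IsPrimeOrdering r) {p : ℕ} [Fact p.Prime]
    (P : Sylow p G) [(P : Subgroup G).Normal]
    (hmax : ∀ q ∈ (Nat.card G).primeFactors, p ∈ phiUpperSet r q)
    (h : IsPhiDispersive r (G ⧸ (P : Subgroup G))) : IsPhiDispersive r G := by
  refine isPhiDispersive_of_forall_isNormalHall hr fun q hq => ?_
  obtain ⟨B, hB⟩ := h.exists_isNormalHall hr (Nat.prime_of_mem_primeFactors hq)
  refine ⟨_, hB.comap_mk' fun s hs hd => ?_⟩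
  rw [P.card_eq_multiplicity] at hd
  rw [(Nat.prime_dvd_prime_iff_eq hs Fact.out).1 (hs.dvd_of_dvd_pow hd)]
  exact hmax q hq

theorem IsPhiDispersive.quotient_frattini_of_surjective (hr : IsPrimeOrdering r)
    (h : IsPhiDispersive r (G ⧸ frattini G)) {H : Type*} [Group H] {f : G →* H}
    (hf : Function.Surjective f) : IsPhiDispersive r (H ⧸ frattini H) :=
  h.of_surjective hr (f := QuotientGroup.map _ _ f (frattini_le_comap_frattini_of_surjective hf))
    (QuotientGroup.map_surjective_of_surjective _ _ _ (QuotientGroup.mk_surjective.comp hf) _)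

theorem IsPhiDispersive.of_quotient_frattini (hr : IsPrimeOrdering r)
    (h : IsPhiDispersive r (G ⧸ frattini G)) : IsPhiDispersive r G := by
  induction hn : Nat.card G using Nat.strong_induction_on generalizing G with
  | _ n ih =>
  obtain hF | hF := (Nat.card G).primeFactors.eq_empty_or_nonempty
  · exact isPhiDispersive_of_forall_isNormalHall hr fun q hq => by simp [hF] at hq
  obtain ⟨p, hpG, hmax⟩ := hr.exists_forall_mem_phiUpperSet _
    (fun _ => Nat.prime_of_mem_primeFactors) hF
  have hp := Nat.prime_of_mem_primeFactors hpG
  have := Fact.mk hp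
  obtain ⟨A, hA⟩ := h.exists_isNormalHall hr hp
  obtain ⟨Q, hQ⟩ := hA.exists_sylow_normal (Or.inl rfl) fun q hq hqG hqA =>
    hr.eq_of_mem_phiUpperSet hp hq hqA (hmax q (Nat.mem_primeFactors_of_ne_zero
      Nat.card_pos.ne' |>.2 ⟨hq, hqG.trans (card_quotient_dvd_card _)⟩))
  obtain ⟨P⟩ : Nonempty (Sylow p G) := inferInstance
  have := Sylow.normal_of_normal_quotient_frattini Q hQ P
  have hlt : Nat.card (G ⧸ (P : Subgroup G)) < n := by
    have hP : 1 < Nat.card P :=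
      (one_lt_card_iff_ne_bot _).2 (P.ne_bot_of_dvd_card (Nat.dvd_of_mem_primeFactors hpG))
    rw [← hn, ← index_eq_card, ← (P : Subgroup G).card_mul_index]
    exact lt_mul_of_one_lt_left index_ne_zero_of_finite.bot_lt hP
  exact isPhiDispersive_of_normal_sylow hr P hmax
    (ih _ hlt (h.quotient_frattini_of_surjective hr (QuotientGroup.mk'_surjective _)) rfl)

/-- For any linear ordering `φ` of the primes, the class of finite `φ`-dispersive groups is a
saturated formation: it is closed under homomorphic images, under subdirect products
(`N₁ ∩ N₂ = 1` with both quotients `φ`-dispersive), and `G/Φ(G)` `φ`-dispersive implies `G`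
`φ`-dispersive. -/
theorem phiDispersive_saturated_formation
    (r : ℕ → ℕ → Prop) (hr : IsPrimeOrdering r) :
    (∀ (G H : Type) [Group G] [Finite G] [Group H] (f : G →* H),
        Function.Surjective f → IsPhiDispersive r G → IsPhiDispersive r H) ∧
    (∀ (G : Type) [Group G] [Finite G] (N₁ N₂ : Subgroup G) [N₁.Normal] [N₂.Normal],
        N₁ ⊓ N₂ = ⊥ → IsPhiDispersive r (G ⧸ N₁) → IsPhiDispersive r (G ⧸ N₂) →
        IsPhiDispersive r G) ∧
    (∀ (G : Type) [Group G] [Finite G],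
        IsPhiDispersive r (G ⧸ frattini G) → IsPhiDispersive r G) :=
  ⟨fun _ _ _ _ _ _ hf hG => hG.of_surjective hr hf,
    fun _ _ _ _ _ _ _ hN h₁ h₂ => isPhiDispersive_of_inf_eq_bot hr hN h₁ h₂,
    fun _ _ _ h => h.of_quotient_frattini hr⟩
end
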